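/- A kernel k : {0,1}^d × {0,1}^d → ℝ is positive semidefinite and invariant under all automorphisms of the hypercube graph Q_d if and only if there exist nonnegative reals α_0, α_1, …, α_d such that k(x, y) = Σ_{j=0}^{d} α_j · Σ_{T ⊆ Fin d, |T| = j} w_T(x) · w_T(y) for all x, y ∈ {0,1}^d. -/

import Mathlib

/-!
Translations `x ↦ a + x` and coordinate permutations are automorphisms of `Q_d`, so an invariant
kernel has the form `k x y = f (x + y)` with `f` invariant under coordinate permutations.
Expanding `f` in the Walsh basis gives `k x y = ∑_T c_T w_T(x) w_T(y)`; evaluating the quadratic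
form of `k` on the vector `w_T` shows `c_T ≥ 0`, and permutation invariance makes `c_T` depend
only on `|T|`. Conversely, each level kernel `∑_{|T| = j} w_T(x) w_T(y)` is a sum of rank-one
kernels, hence positive semidefinite, and it depends only on the Hamming weight of `x + y`,
which every automorphism preserves since it is the graph distance in `Q_d`.
-/

/-- Hamming weight of a point of the Boolean cube `{0,1}^d`. -/
def wt {d : ℕ} (x : Fin d → ZMod 2) : ℕ :=
  (Finset.univ.filter (fun i => x i = 1)).card

/-- The hypercube graph `Q_d`. -/
def cubeGraph (d : ℕ) : SimpleGraph (Fin d → ZMod 2) where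
  Adj x y := wt (x + y) = 1
  symm := ⟨fun x y h => by show wt (y + x) = 1; rw [add_comm]; exact h⟩
  loopless := ⟨fun x h => by
    change wt (x + x) = 1 at h
    have hx : x + x = 0 := by funext i; exact CharTwo.add_self_eq_zero (x i)
    rw [hx] at h
    simp [wt] at h⟩

/-- The Walsh function `w_T` on the Boolean cube `{0,1}^d`. -/
def walsh {d : ℕ} (T : Finset (Fin d)) (x : Fin d → ZMod 2) : ℝ :=
  (-1 : ℝ) ^ (T.filter (fun t => x t = 1)).card

/-- A kernel is positive semidefinite if it is symmetric and all its quadratic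
forms on finite tuples are nonnegative. -/
def IsPSD {X : Type*} (k : X → X → ℝ) : Prop :=
  (∀ x y, k x y = k y x) ∧
    ∀ (m : ℕ) (x : Fin m → X) (c : Fin m → ℝ),
      0 ≤ ∑ i, ∑ j, c i * c j * k (x i) (x j)

open Finset

section Kernel

variable {X : Type*}

lemma IsPSD.sum_sum_nonneg {ι : Type*} [Fintype ι] {k : X → X → ℝ} (hk : IsPSD k) (x : ι → X)
    (c : ι → ℝ) : 0 ≤ ∑ i, ∑ j, c i * c j * k (x i) (x j) := by
  let e := Fintype.equivFin ι
  have h := hk.2 _ (x ∘ e.symm) (c ∘ e.symm)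
  simp only [Function.comp_apply] at h
  rwa [e.symm.sum_comp fun i => ∑ j, c i * c (e.symm j) * k (x i) (x (e.symm j)),
    sum_congr rfl fun i _ => e.symm.sum_comp fun j => c i * c j * k (x i) (x j)] at h

lemma IsPSD.mul_self (g : X → ℝ) : IsPSD fun x y => g x * g y := by
  refine ⟨fun x y => mul_comm _ _, fun m x c => ?_⟩
  have h : ∑ i, ∑ j, c i * c j * (g (x i) * g (x j)) = (∑ i, c i * g (x i)) ^ 2 := by
    rw [sq, sum_mul_sum]
    exact sum_congr rfl fun i _ => sum_congr rfl fun j _ => by ring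
  rw [h]
  positivity

lemma IsPSD.const_mul {k : X → X → ℝ} (hk : IsPSD k) {a : ℝ} (ha : 0 ≤ a) :
    IsPSD fun x y => a * k x y := by
  refine ⟨fun x y => congrArg (a * ·) (hk.1 x y), fun m x c => ?_⟩
  have h : ∑ i, ∑ j, c i * c j * (a * k (x i) (x j)) =
      a * ∑ i, ∑ j, c i * c j * k (x i) (x j) := by
    simp only [mul_sum]
    exact sum_congr rfl fun i _ => sum_congr rfl fun j _ => by ring
  rw [h]
  exact mul_nonneg ha (hk.2 m x c)

lemma IsPSD.sum {ι : Type*} {k : ι → X → X → ℝ} (s : Finset ι) (hk : ∀ i ∈ s, IsPSD (k i)) :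
    IsPSD fun x y => ∑ i ∈ s, k i x y := by
  refine ⟨fun x y => Finset.sum_congr rfl fun i hi => (hk i hi).1 x y, fun m x c => ?_⟩
  have h : ∑ a, ∑ b, c a * c b * ∑ i ∈ s, k i (x a) (x b) =
      ∑ i ∈ s, ∑ a, ∑ b, c a * c b * k i (x a) (x b) := by
    simp only [mul_sum]
    exact (Finset.sum_congr rfl fun a _ => Finset.sum_comm).trans Finset.sum_comm
  rw [h]
  exact Finset.sum_nonneg fun i hi => (hk i hi).2 m x c

end Kernel

lemma SimpleGraph.Hom.edist_map_le {V W : Type*} {G : SimpleGraph V} {H : SimpleGraph W}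
    (f : G →g H) (u v : V) : H.edist (f u) (f v) ≤ G.edist u v := by
  by_cases h : G.Reachable u v
  · obtain ⟨p, hp⟩ := h.exists_walk_length_eq_edist
    rw [← hp, ← p.length_map f]
    exact SimpleGraph.edist_le _
  · rw [SimpleGraph.edist_eq_top_of_not_reachable h]
    exact le_top

lemma SimpleGraph.Iso.edist_map {V W : Type*} {G : SimpleGraph V} {H : SimpleGraph W}
    (f : G ≃g H) (u v : V) : H.edist (f u) (f v) = G.edist u v :=
  le_antisymm (f.toHom.edist_map_le u v) (by simpa using f.symm.toHom.edist_map_le (f u) (f v))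

section Hamming

variable {ι : Type*} [Fintype ι] [DecidableEq ι] {β : ι → Type*} [∀ i, DecidableEq (β i)]

lemma hammingDist_update_self {x : ∀ i, β i} {i : ι} {a : β i} (h : x i ≠ a) :
    hammingDist x (Function.update x i a) = 1 := by
  rw [hammingDist, card_eq_one]
  refine ⟨i, ext fun j => ?_⟩
  rcases eq_or_ne j i with rfl | hj <;> simp [*]

lemma hammingDist_update_add_one {x y : ∀ i, β i} {i : ι} (h : x i ≠ y i) :
    hammingDist (Function.update x i (y i)) y + 1 = hammingDist x y := by
  have hs : ({j | Function.update x i (y i) j ≠ y j} : Finset ι) =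
      ({j | x j ≠ y j} : Finset ι).erase i := by
    ext j
    rcases eq_or_ne j i with rfl | hj <;> simp [*]
  rw [hammingDist, hs, card_erase_add_one (by simpa using h), hammingDist]

end Hamming

section CubeGraph

variable {d : ℕ}

lemma wt_add_eq_hammingDist (x y : Fin d → ZMod 2) : wt (x + y) = hammingDist x y := by
  have h : ∀ a b : ZMod 2, a + b = 1 ↔ a ≠ b := by decide
  simp only [wt, hammingDist, Pi.add_apply, h]

lemma cubeGraph_adj {x y : Fin d → ZMod 2} : (cubeGraph d).Adj x y ↔ hammingDist x y = 1 := by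
  rw [← wt_add_eq_hammingDist]; rfl

lemma cubeGraph_exists_walk (x y : Fin d → ZMod 2) :
    ∃ p : (cubeGraph d).Walk x y, p.length = hammingDist x y := by
  generalize hn : hammingDist x y = n
  induction n generalizing x with
  | zero =>
    obtain rfl := hammingDist_eq_zero.1 hn
    exact ⟨.nil, rfl⟩
  | succ n ih =>
    obtain ⟨i, hi⟩ := Function.ne_iff.1 ((hammingDist_ne_zero (x := x) (y := y)).1 (by omega))
    have hstep := hammingDist_update_add_one hi
    obtain ⟨p, hp⟩ := ih (Function.update x i (y i)) (by omega)
    exact ⟨.cons (cubeGraph_adj.2 (hammingDist_update_self hi)) p, by simp [hp]⟩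

lemma hammingDist_le_length {x y : Fin d → ZMod 2} (p : (cubeGraph d).Walk x y) :
    hammingDist x y ≤ p.length := by
  induction p with
  | nil => simp
  | @cons u v w h p ih =>
    have := hammingDist_triangle u v w
    rw [cubeGraph_adj.1 h] at this
    rw [SimpleGraph.Walk.length_cons]
    omega

lemma cubeGraph_edist (x y : Fin d → ZMod 2) : (cubeGraph d).edist x y = hammingDist x y := by
  obtain ⟨p, hp⟩ := cubeGraph_exists_walk x y
  obtain ⟨q, hq⟩ := p.reachable.exists_walk_length_eq_edist
  exact le_antisymm (hp ▸ SimpleGraph.edist_le p) (hq ▸ Nat.cast_le.2 (hammingDist_le_length q))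

lemma wt_add_map_cubeGraph_iso (φ : cubeGraph d ≃g cubeGraph d) (x y : Fin d → ZMod 2) :
    wt (φ x + φ y) = wt (x + y) := by
  simp only [wt_add_eq_hammingDist]
  exact_mod_cast (cubeGraph_edist _ _).symm.trans ((φ.edist_map x y).trans (cubeGraph_edist x y))

def cubeGraph.addLeftIso (a : Fin d → ZMod 2) : cubeGraph d ≃g cubeGraph d where
  toEquiv := Equiv.addLeft a
  map_rel_iff' {x y} := by
    change wt ((a + x) + (a + y)) = 1 ↔ wt (x + y) = 1
    rw [add_add_add_comm, ZModModule.add_self, zero_add]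

lemma wt_comp_perm (z : Fin d → ZMod 2) (σ : Equiv.Perm (Fin d)) : wt (z ∘ σ) = wt z :=
  card_equiv σ fun i => by simp

def cubeGraph.compPermIso (σ : Equiv.Perm (Fin d)) : cubeGraph d ≃g cubeGraph d where
  toEquiv := σ.symm.arrowCongr (.refl _)
  map_rel_iff' {x y} := by
    change wt (x ∘ σ + y ∘ σ) = 1 ↔ wt (x + y) = 1
    rw [← Pi.add_comp, wt_comp_perm]

lemma exists_perm_comp_eq_of_wt_eq {z z' : Fin d → ZMod 2} (h : wt z = wt z') :
    ∃ σ : Equiv.Perm (Fin d), z ∘ σ = z' := by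
  obtain ⟨σ, hσ⟩ := Equiv.Perm.exists_map_finset_eq {i | z' i = 1} {i | z i = 1} h.symm
  refine ⟨σ, funext fun i => ?_⟩
  have hi : z (σ i) = 1 ↔ z' i = 1 := by
    simpa using (congrArg (σ i ∈ ·) hσ).symm
  have two_valued : ∀ a b : ZMod 2, (a = 1 ↔ b = 1) → a = b := by decide
  exact two_valued _ _ hi

end CubeGraph

section Walsh

variable {d : ℕ}

lemma walsh_eq_prod (T : Finset (Fin d)) (x : Fin d → ZMod 2) :
    walsh T x = ∏ t ∈ T, if x t = 1 then (-1 : ℝ) else 1 := by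
  rw [prod_ite, prod_const, prod_const_one, mul_one]
  rfl

lemma walsh_add (T : Finset (Fin d)) (x y : Fin d → ZMod 2) :
    walsh T (x + y) = walsh T x * walsh T y := by
  simp only [walsh_eq_prod, ← prod_mul_distrib, Pi.add_apply]
  have sign_add : ∀ a b : ZMod 2, (if a + b = 1 then (-1 : ℝ) else 1) =
      (if a = 1 then -1 else 1) * (if b = 1 then -1 else 1) := by
    have two_valued : ∀ a : ZMod 2, a = 0 ∨ a = 1 := by decide
    intro a b
    rcases two_valued a with rfl | rfl <;> rcases two_valued b with rfl | rfl <;> simp +decide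
  exact prod_congr rfl fun t _ => sign_add _ _

lemma walsh_comp_perm (T : Finset (Fin d)) (σ : Equiv.Perm (Fin d)) (x : Fin d → ZMod 2) :
    walsh T (x ∘ σ) = walsh (T.map σ.toEmbedding) x := by
  rw [walsh, walsh, filter_map, card_map]
  rfl

lemma sum_walsh (z : Fin d → ZMod 2) : ∑ T, walsh T z = if z = 0 then 2 ^ d else 0 := by
  have hprod : ∑ T, walsh T z = ∏ i, (1 + if z i = 1 then (-1 : ℝ) else 1) := by
    rw [prod_one_add, powerset_univ]
    simp only [walsh_eq_prod]
  rw [hprod]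
  split_ifs with hz
  · subst hz
    norm_num
  · obtain ⟨i, hi⟩ := Function.ne_iff.1 hz
    have two_valued : ∀ a : ZMod 2, a ≠ 0 → a = 1 := by decide
    exact prod_eq_zero (mem_univ i) (by simp [two_valued _ hi])

lemma sum_walsh_mul_walsh (w z : Fin d → ZMod 2) :
    ∑ T, walsh T w * walsh T z = if w = z then 2 ^ d else 0 := by
  simp only [← walsh_add, sum_walsh, add_eq_zero_iff_eq_neg, ZModModule.neg_eq_self]

end Walsh

section Fourier

variable {d : ℕ}

noncomputable def walshCoeff (f : (Fin d → ZMod 2) → ℝ) (T : Finset (Fin d)) : ℝ :=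
  (∑ z, f z * walsh T z) / 2 ^ d

lemma sum_walshCoeff_mul_walsh (f : (Fin d → ZMod 2) → ℝ) (z : Fin d → ZMod 2) :
    ∑ T, walshCoeff f T * walsh T z = f z := by
  calc ∑ T, walshCoeff f T * walsh T z = (∑ w, f w * ∑ T, walsh T w * walsh T z) / 2 ^ d := by
        simp only [walshCoeff, div_mul_eq_mul_div, ← sum_div, sum_mul, mul_sum, mul_assoc]
        rw [Finset.sum_comm]
    _ = f z := by simp [sum_walsh_mul_walsh]

lemma walshCoeff_nonneg {f : (Fin d → ZMod 2) → ℝ} (hf : IsPSD fun x y => f (x + y))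
    (T : Finset (Fin d)) : 0 ≤ walshCoeff f T := by
  have hrow (u : Fin d → ZMod 2) :
      ∑ v, walsh T u * walsh T v * f (u + v) = ∑ w, f w * walsh T w :=
    Fintype.sum_equiv (Equiv.addLeft u) _ _ fun v => by rw [Equiv.coe_addLeft, walsh_add]; ring
  have hquad : ∑ u, ∑ v, walsh T u * walsh T v * f (u + v) = 2 ^ d * ∑ w, f w * walsh T w := by
    simp [hrow]
  have h := hf.sum_sum_nonneg id (walsh T)
  simp only [id, hquad] at h
  exact div_nonneg (nonneg_of_mul_nonneg_right h (by positivity)) (by positivity)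

lemma walshCoeff_map_perm {f : (Fin d → ZMod 2) → ℝ}
    (hf : ∀ (σ : Equiv.Perm (Fin d)) z, f (z ∘ σ) = f z) (σ : Equiv.Perm (Fin d))
    (T : Finset (Fin d)) : walshCoeff f (T.map σ.toEmbedding) = walshCoeff f T := by
  simp only [walshCoeff, ← walsh_comp_perm]
  congr 1
  refine Fintype.sum_equiv (σ.symm.arrowCongr (.refl _)) _ _ fun z => ?_
  change _ = f (z ∘ σ) * walsh T (z ∘ σ)
  rw [hf]

lemma walshCoeff_factorsThrough_card {f : (Fin d → ZMod 2) → ℝ}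
    (hf : ∀ (σ : Equiv.Perm (Fin d)) z, f (z ∘ σ) = f z) :
    (walshCoeff f).FactorsThrough card := fun T S h => by
  obtain ⟨σ, rfl⟩ := Equiv.Perm.exists_map_finset_eq T S h
  exact (walshCoeff_map_perm hf σ T).symm

end Fourier

section LevelSum

variable {d : ℕ}

def walshLevelSum (j : ℕ) (z : Fin d → ZMod 2) : ℝ :=
  ∑ T ∈ univ.filter (fun T : Finset (Fin d) => T.card = j), walsh T z

lemma sum_filter_card_walsh_mul_walsh (j : ℕ) (x y : Fin d → ZMod 2) :
    ∑ T ∈ univ.filter (fun T : Finset (Fin d) => T.card = j), walsh T x * walsh T y =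
      walshLevelSum j (x + y) := by
  simp only [walshLevelSum, walsh_add]

lemma walshLevelSum_comp_perm (j : ℕ) (σ : Equiv.Perm (Fin d)) (z : Fin d → ZMod 2) :
    walshLevelSum j (z ∘ σ) = walshLevelSum j z := by
  simp only [walshLevelSum, walsh_comp_perm]
  exact sum_equiv σ.finsetCongr (by simp) fun T _ => rfl

lemma walshLevelSum_eq_of_wt_eq (j : ℕ) {z z' : Fin d → ZMod 2} (h : wt z = wt z') :
    walshLevelSum j z = walshLevelSum j z' := by
  obtain ⟨σ, rfl⟩ := exists_perm_comp_eq_of_wt_eq h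
  exact (walshLevelSum_comp_perm j σ z).symm

end LevelSum

lemma sum_eq_sum_range_sum_filter_card {α M : Type*} [Fintype α] [AddCommMonoid M]
    (g : Finset α → M) :
    ∑ T, g T = ∑ j ∈ range (Fintype.card α + 1),
      ∑ T ∈ univ.filter (fun T : Finset α => T.card = j), g T :=
  (sum_fiberwise_of_maps_to (fun T _ => mem_range_succ_iff.2 (card_le_univ T)) g).symm

/-- A kernel on the Boolean cube is positive semidefinite and invariant under
all automorphisms of the hypercube graph iff it is a nonnegative combination
of the level sums of Walsh functions. -/
theorem stmt3 (d : ℕ) (k : (Fin d → ZMod 2) → (Fin d → ZMod 2) → ℝ) :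
    (IsPSD k ∧ ∀ φ : cubeGraph d ≃g cubeGraph d, ∀ x y : Fin d → ZMod 2,
        k (φ x) (φ y) = k x y) ↔
      ∃ α : ℕ → ℝ, (∀ j ≤ d, 0 ≤ α j) ∧
        ∀ x y : Fin d → ZMod 2,
          k x y = ∑ j ∈ Finset.range (d + 1), α j *
            ∑ T ∈ Finset.univ.filter (fun T : Finset (Fin d) => T.card = j),
              walsh T x * walsh T y := by
  constructor
  · rintro ⟨hpsd, hinv⟩
    set f : (Fin d → ZMod 2) → ℝ := fun z => k z 0
    have hkf : ∀ x y, k x y = f (x + y) := fun x y => by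
      rw [← hinv (cubeGraph.addLeftIso y) x y]
      change k (y + x) (y + y) = k (x + y) 0
      rw [add_comm, ZModModule.add_self]
    have hf (σ : Equiv.Perm (Fin d)) (z : Fin d → ZMod 2) : f (z ∘ σ) = f z :=
      hinv (cubeGraph.compPermIso σ) z 0
    have hfpsd : IsPSD fun x y => f (x + y) := funext (fun x => funext (hkf x)) ▸ hpsd
    refine ⟨Function.extend card (walshCoeff f) 0, fun j _ => ?_, fun x y => ?_⟩
    · rw [Function.extend_def]
      split_ifs
      exacts [walshCoeff_nonneg hfpsd _, le_rfl]
    · rw [hkf, ← sum_walshCoeff_mul_walsh f, sum_eq_sum_range_sum_filter_card, Fintype.card_fin]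
      refine sum_congr rfl fun j _ => ?_
      rw [mul_sum]
      refine sum_congr rfl fun T hT => ?_
      rw [← (mem_filter.1 hT).2, (walshCoeff_factorsThrough_card hf).extend_apply, walsh_add]
  · rintro ⟨α, hα, hk⟩
    obtain rfl := funext fun x => funext (hk x)
    refine ⟨IsPSD.sum _ fun j hj => ?_, fun φ x y => ?_⟩
    · exact (IsPSD.sum _ fun T _ => IsPSD.mul_self (walsh T)).const_mul
        (hα j (Nat.lt_succ_iff.1 (mem_range.1 hj)))
    · simp only [sum_filter_card_walsh_mul_walsh,
        walshLevelSum_eq_of_wt_eq _ (wt_add_map_cubeGraph_iso φ x y)]
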